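/- Let n ≥ 6, a ≥ 2 have the same parity, with k = (n−a−2)/2 ≥ 1 an integer. Let K_{2,a} * F_k be the graph obtained by identifying a vertex of K_{2,a} in the part of size 2 with the central vertex of the friendship graph F_k. Then ρ(K_{2,a} * F_k) < √(2n−4). -/

import Mathlib

/-- The spectral radius (largest adjacency eigenvalue) of a finite simple graph. -/
noncomputable def specRad {V : Type*} [Finite V] (G : SimpleGraph V) : ℝ :=
  letI := Fintype.ofFinite V
  letI := Classical.decEq V
  letI := Classical.decRel G.Adj
  sSup (spectrum ℝ (G.adjMatrix ℝ))

/-- The graph `K_{2,a} * F_k`, obtained by identifying a vertex of the part of size `2`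
of `K_{2,a}` with the central vertex of the friendship graph `F_k`.
Vertices `0, 1` form the part of size `2` (with `0` the identified center),
vertices `2, …, a+1` form the part of size `a`, and vertices `a+2, …, a+1+2k` are the
leaves of the friendship graph, paired by `{a+2+2i, a+3+2i}` and all joined to `0`. -/
def KstarF (a k : ℕ) : SimpleGraph (Fin (a + 2 + 2 * k)) :=
  SimpleGraph.fromRel (fun i j =>
    (2 ≤ i.val ∧ i.val < a + 2 ∧ (j.val = 0 ∨ j.val = 1)) ∨
    (i.val = 0 ∧ a + 2 ≤ j.val) ∨
    (a + 2 ≤ i.val ∧ a + 2 ≤ j.val ∧ (i.val - (a + 2)) / 2 = (j.val - (a + 2)) / 2))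

/-!
A nonnegative matrix `B` and a positive vector `w` with `B w < c • w` entrywise force every real
eigenvalue of `B` below `c` in absolute value (Collatz–Wielandt: look at a coordinate maximising
`|x i| / w i`). Apply this to `B = A²`, `c = 2a + 4k = 2n - 4`, with `w` equal to `3` on the leaves
of the friendship graph and `4` elsewhere. The partition into the centre, the other vertex of the
part of size 2, the part of size `a` and the leaves is equitable, so `A²w` is again constant on the
classes, with values `8a + 14k`, `8a`, `8a + 6k`, `4a + 6k + 7`. The all-ones vector would give
equality at the centre; lowering the leaves to `3` makes every coordinate strict.
-/

open Finset SimpleGraph Matrix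

theorem Matrix.abs_eigenvalue_lt_of_mulVec_lt {ι K : Type*} [Fintype ι] [Field K]
    [LinearOrder K] [IsStrictOrderedRing K] {B : Matrix ι ι K} (hB : ∀ i j, 0 ≤ B i j)
    {w : ι → K} (hw : ∀ i, 0 < w i) {c : K} (hBw : ∀ i, (B *ᵥ w) i < c * w i)
    {μ : K} {x : ι → K} (hx : x ≠ 0) (hμ : B *ᵥ x = μ • x) : |μ| < c := by
  obtain ⟨j, hj⟩ := Function.ne_iff.1 hx
  have : Nonempty ι := ⟨j⟩
  obtain ⟨i, hi⟩ := Finite.exists_max fun i => |x i| / w i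
  set t := |x i| / w i
  have hxw : ∀ j, |x j| ≤ t * w j := fun j => (div_le_iff₀ (hw j)).1 (hi j)
  have ht : 0 < t := (div_pos (abs_pos.2 hj) (hw j)).trans_le (hi j)
  have hxi : |x i| = t * w i := (div_mul_cancel₀ _ (hw i).ne').symm
  have key : |μ| * |x i| < c * |x i| := calc
    |μ| * |x i| = |∑ j, B i j * x j| := by
      rw [← abs_mul, ← smul_eq_mul, ← Pi.smul_apply, ← hμ]; rfl
    _ ≤ ∑ j, B i j * (t * w j) := by
      refine (abs_sum_le_sum_abs _ _).trans (sum_le_sum fun j _ => ?_)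
      rw [abs_mul, abs_of_nonneg (hB i j)]
      exact mul_le_mul_of_nonneg_left (hxw j) (hB i j)
    _ = t * (B *ᵥ w) i := by
      simp only [mulVec, dotProduct, mul_sum]
      exact sum_congr rfl fun j _ => by ring
    _ < t * (c * w i) := mul_lt_mul_of_pos_left (hBw i) ht
    _ = c * |x i| := by rw [hxi]; ring
  exact lt_of_mul_lt_mul_right key (abs_nonneg _)

theorem Matrix.exists_mulVec_eq_smul_of_mem_spectrum {ι K : Type*} [Fintype ι] [DecidableEq ι]
    [Field K] {A : Matrix ι ι K} {μ : K} (hμ : μ ∈ spectrum K A) :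
    ∃ x ≠ 0, A *ᵥ x = μ • x := by
  rw [← spectrum_toLin', ← Module.End.hasEigenvalue_iff_mem_spectrum] at hμ
  obtain ⟨x, hx⟩ := hμ.exists_hasEigenvector
  exact ⟨x, hx.2, by simpa using hx.apply_eq_smul⟩

theorem Real.sSup_lt_of_finite {s : Set ℝ} (hs : s.Finite) {c : ℝ} (hc : 0 < c)
    (h : ∀ x ∈ s, x < c) : sSup s < c := by
  rcases s.eq_empty_or_nonempty with rfl | hne
  · rwa [Real.sSup_empty]
  · exact h _ (hne.csSup_mem hs)

theorem specRad_eq {V : Type*} [Fintype V] [DecidableEq V] (G : SimpleGraph V)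
    [DecidableRel G.Adj] : specRad G = sSup (spectrum ℝ (G.adjMatrix ℝ)) := by
  unfold specRad
  congr!

theorem Fin.card_filter_le_val_lt {n lo hi : ℕ} (h : hi ≤ n) :
    #{i : Fin n | lo ≤ i.val ∧ i.val < hi} = hi - lo := by
  rw [← card_map Fin.valEmbedding, ← Nat.card_Ico lo hi]
  congr 1
  ext m
  simp only [mem_map, mem_filter, mem_univ, true_and, Fin.valEmbedding_apply, mem_Ico]
  exact ⟨by rintro ⟨i, hi, rfl⟩; exact hi, fun hm => ⟨⟨m, by omega⟩, hm, rfl⟩⟩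

namespace KstarF

theorem adj_iff {a k : ℕ} (i j : Fin (a + 2 + 2 * k)) :
    (KstarF a k).Adj i j ↔ i.val ≠ j.val ∧
      ((i.val = 0 ∧ 2 ≤ j.val) ∨ (j.val = 0 ∧ 2 ≤ i.val) ∨
        (i.val = 1 ∧ 2 ≤ j.val ∧ j.val < a + 2) ∨
        (j.val = 1 ∧ 2 ≤ i.val ∧ i.val < a + 2) ∨
        (a + 2 ≤ i.val ∧ a + 2 ≤ j.val ∧
          (i.val - (a + 2)) / 2 = (j.val - (a + 2)) / 2)) := by
  rw [KstarF, fromRel_adj, ne_eq, Fin.ext_iff]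
  omega

variable (a k : ℕ)

def middle : Finset (Fin (a + 2 + 2 * k)) := {u | 2 ≤ u.val ∧ u.val < a + 2}

def leaves : Finset (Fin (a + 2 + 2 * k)) := {u | a + 2 ≤ u.val ∧ u.val < a + 2 + 2 * k}

theorem card_middle : #(middle a k) = a := by
  rw [middle, Fin.card_filter_le_val_lt (by omega)]
  omega

theorem card_leaves : #(leaves a k) = 2 * k := by
  rw [leaves, Fin.card_filter_le_val_lt le_rfl]
  omega

theorem disjoint_middle_leaves : Disjoint (middle a k) (leaves a k) := by
  simp only [middle, leaves, disjoint_filter]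
  omega

def blockVec (c₀ c₁ cₘ cₗ : ℝ) (v : Fin (a + 2 + 2 * k)) : ℝ :=
  if v.val = 0 then c₀ else if v.val = 1 then c₁ else if v.val < a + 2 then cₘ else cₗ

variable {a k} {v : Fin (a + 2 + 2 * k)}

theorem blockVec_of_mem_middle {c₀ c₁ cₘ cₗ : ℝ} (hv : v ∈ middle a k) :
    blockVec a k c₀ c₁ cₘ cₗ v = cₘ := by
  simp only [middle, mem_filter, mem_univ, true_and] at hv
  simp only [blockVec]
  rw [if_neg (by omega), if_neg (by omega), if_pos hv.2]

theorem blockVec_of_mem_leaves {c₀ c₁ cₘ cₗ : ℝ} (hv : v ∈ leaves a k) :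
    blockVec a k c₀ c₁ cₘ cₗ v = cₗ := by
  simp only [leaves, mem_filter, mem_univ, true_and] at hv
  simp only [blockVec]
  rw [if_neg (by omega), if_neg (by omega), if_neg (by omega)]

variable [DecidableRel (KstarF a k).Adj]

theorem neighborFinset_of_val_eq_zero (hv : v.val = 0) :
    (KstarF a k).neighborFinset v = middle a k ∪ leaves a k := by
  ext u
  have := u.isLt
  simp only [mem_neighborFinset, adj_iff, middle, leaves, mem_union, mem_filter, mem_univ,
    true_and]
  omega

theorem neighborFinset_of_val_eq_one (hv : v.val = 1) :
    (KstarF a k).neighborFinset v = middle a k := by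
  ext u
  simp only [mem_neighborFinset, adj_iff, middle, mem_filter, mem_univ, true_and]
  omega

theorem neighborFinset_of_mem_middle (hv : v ∈ middle a k) :
    (KstarF a k).neighborFinset v = {⟨0, by omega⟩, ⟨1, by omega⟩} := by
  simp only [middle, mem_filter, mem_univ, true_and] at hv
  ext u
  simp only [mem_neighborFinset, adj_iff, mem_insert, mem_singleton, Fin.ext_iff]
  omega

theorem exists_neighborFinset_of_mem_leaves (hv : v ∈ leaves a k) :
    ∃ p ∈ leaves a k, (KstarF a k).neighborFinset v = {⟨0, by omega⟩, p} := by
  simp only [leaves, mem_filter, mem_univ, true_and] at hv ⊢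
  refine ⟨⟨if (v.val - (a + 2)) % 2 = 0 then v.val + 1 else v.val - 1, by split <;> omega⟩,
    by dsimp only; split <;> omega, ?_⟩
  ext u
  simp only [mem_neighborFinset, adj_iff, mem_insert, mem_singleton, Fin.ext_iff]
  split <;> omega

theorem adjMatrix_mulVec_blockVec (c₀ c₁ cₘ cₗ : ℝ) :
    (KstarF a k).adjMatrix ℝ *ᵥ blockVec a k c₀ c₁ cₘ cₗ =
      blockVec a k (a * cₘ + 2 * k * cₗ) (a * cₘ) (c₀ + c₁) (c₀ + cₗ) := by
  ext v
  rw [adjMatrix_mulVec_apply]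
  obtain hv | hv | hv | hv : v.val = 0 ∨ v.val = 1 ∨ v ∈ middle a k ∨ v ∈ leaves a k := by
    simp only [middle, leaves, mem_filter, mem_univ, true_and]
    omega
  · rw [neighborFinset_of_val_eq_zero hv, sum_union (disjoint_middle_leaves a k),
      sum_eq_card_nsmul fun u => blockVec_of_mem_middle, card_middle,
      sum_eq_card_nsmul fun u => blockVec_of_mem_leaves, card_leaves]
    simp [blockVec, hv]
  · rw [neighborFinset_of_val_eq_one hv, sum_eq_card_nsmul fun u => blockVec_of_mem_middle,
      card_middle]
    simp [blockVec, hv]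
  · rw [neighborFinset_of_mem_middle hv, sum_pair (by simp [Fin.ext_iff]),
      blockVec_of_mem_middle hv]
    simp [blockVec]
  · obtain ⟨p, hp, hN⟩ := exists_neighborFinset_of_mem_leaves hv
    have hp0 : (⟨0, by omega⟩ : Fin (a + 2 + 2 * k)) ≠ p := by
      simp only [leaves, mem_filter, mem_univ, true_and] at hp
      simp only [ne_eq, Fin.ext_iff]
      omega
    rw [hN, sum_pair hp0, blockVec_of_mem_leaves hp, blockVec_of_mem_leaves hv]
    simp [blockVec]

theorem sq_lt_of_mem_spectrum (ha : 1 ≤ a) (hk : 1 ≤ k) {μ : ℝ}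
    (hμ : μ ∈ spectrum ℝ ((KstarF a k).adjMatrix ℝ)) : μ ^ 2 < 2 * a + 4 * k := by
  set A := (KstarF a k).adjMatrix ℝ
  obtain ⟨x, hx, hAx⟩ := exists_mulVec_eq_smul_of_mem_spectrum hμ
  have hA2x : (A * A) *ᵥ x = μ ^ 2 • x := by
    rw [← mulVec_mulVec, hAx, mulVec_smul, hAx, smul_smul, sq]
  have hA : ∀ i j, 0 ≤ A i j := fun i j => by
    simp only [A, adjMatrix_apply]
    split_ifs <;> norm_num
  have hA2 : ∀ i j, 0 ≤ (A * A) i j := fun i j => by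
    rw [Matrix.mul_apply]
    exact sum_nonneg fun u _ => mul_nonneg (hA i u) (hA u j)
  have hA2w : (A * A) *ᵥ blockVec a k 4 4 4 3 =
      blockVec a k (8 * a + 14 * k) (8 * a) (8 * a + 6 * k) (4 * a + 6 * k + 7) := by
    rw [← mulVec_mulVec, adjMatrix_mulVec_blockVec, adjMatrix_mulVec_blockVec]
    congr 1 <;> ring
  have ha' : (1 : ℝ) ≤ a := by exact_mod_cast ha
  have hk' : (1 : ℝ) ≤ k := by exact_mod_cast hk
  have habs := abs_eigenvalue_lt_of_mulVec_lt hA2 (w := blockVec a k 4 4 4 3)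
    (c := 2 * a + 4 * k)
    (fun i => by unfold blockVec; split_ifs <;> norm_num)
    (fun i => by rw [hA2w]; unfold blockVec; split_ifs <;> linarith) hx hA2x
  rwa [abs_of_nonneg (sq_nonneg μ)] at habs

end KstarF

theorem stmt_18_general (n a k : ℕ) (ha : 2 ≤ a) (hk : 1 ≤ k)
    (hnak : n = a + 2 + 2 * k) :
    specRad (KstarF a k) < Real.sqrt (2 * n - 4) := by
  classical
  have hn : 2 * (n : ℝ) - 4 = 2 * a + 4 * k := by rw [hnak]; push_cast; ring
  rw [specRad_eq, hn]
  refine Real.sSup_lt_of_finite (finite_spectrum _) (by positivity) fun μ hμ =>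
    Real.lt_sqrt_of_sq_lt (KstarF.sq_lt_of_mem_spectrum (by omega) hk hμ)

theorem stmt_18 (n a k : ℕ) (hn : 6 ≤ n) (ha : 2 ≤ a) (hk : 1 ≤ k)
    (hnak : n = a + 2 + 2 * k) :
    specRad (KstarF a k) < Real.sqrt (2 * n - 4) :=
  stmt_18_general n a k ha hk hnak
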